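/- arXiv:2501.07757 — 3 statements merged into one kernel-verified Lean document; each statement's English description precedes it below -/
import Mathlib

section
/- Let S ⊆ ℝ be a set closed under addition (s, t ∈ S implies s + t ∈ S), and let a, b be real numbers with 0 < a < b such that the open interval (a, b) is contained in S. Then the open ray (ab/(b−a), +∞) is contained in S. -/
private lemma nsmul_mem_of_addClosed (S : Set ℝ) (hS : ∀ s ∈ S, ∀ t ∈ S, s + t ∈ S)
    {x : ℝ} (hx : x ∈ S) : ∀ n : ℕ, 1 ≤ n → (n : ℝ) * x ∈ S := by
  intro n hn
  induction n with
  | zero => omega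
  | succ m ih =>
    rcases Nat.eq_or_lt_of_le hn with h | h
    · have : m = 0 := by omega
      subst this; simpa using hx
    · have hm : 1 ≤ m := by omega
      have := hS _ (ih hm) _ hx
      have : (m : ℝ) * x + x ∈ S := this
      simpa [add_mul] using this

/-- If `S ⊆ ℝ` is closed under addition and contains an interval `(a, b)` with
`0 < a < b`, then `S` contains the ray `(ab/(b-a), ∞)`. -/
theorem Ioi_subset_of_addClosed_of_Ioo_subset
    (S : Set ℝ) (hS : ∀ s ∈ S, ∀ t ∈ S, s + t ∈ S)
    (a b : ℝ) (ha : 0 < a) (hab : a < b) (hIoo : Set.Ioo a b ⊆ S) :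
    Set.Ioi (a * b / (b - a)) ⊆ S := by
  intro t ht
  simp only [Set.mem_Ioi] at ht
  have hb : 0 < b := ha.trans hab
  have hba : 0 < b - a := by linarith
  have ht0 : 0 < t := lt_trans (by positivity) ht
  -- key gap: t/a - t/b > 1
  have hgap : t / b + 1 < t / a := by
    rw [div_add' _ _ _ hb.ne', div_lt_div_iff₀ hb ha]
    have : a * b < t * (b - a) := (div_lt_iff₀ hba).mp ht
    nlinarith
  set n : ℕ := ⌊t / b⌋.toNat + 1 with hn
  have hfl : (0:ℤ) ≤ ⌊t / b⌋ := Int.floor_nonneg.2 (by positivity)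
  have hncast : (n : ℝ) = (⌊t / b⌋ : ℝ) + 1 := by
    rw [hn, Nat.cast_add, Nat.cast_one]
    congr 1
    exact_mod_cast Int.toNat_of_nonneg hfl
  have h1 : t / b < n := by
    rw [hncast]; exact Int.lt_floor_add_one _
  have h2 : (n : ℝ) < t / a := by
    rw [hncast]
    have := Int.floor_le (t / b)
    linarith
  have hnpos : (0:ℝ) < n := lt_trans (by positivity) h1
  have hx : t / n ∈ Set.Ioo a b := by
    constructor
    · rw [lt_div_iff₀ hnpos]
      calc (a : ℝ) * n < a * (t / a) := by exact mul_lt_mul_of_pos_left h2 ha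
        _ = t := by field_simp
    · rw [div_lt_iff₀ hnpos]
      calc t = b * (t / b) := by field_simp
        _ < b * n := mul_lt_mul_of_pos_left h1 hb
  have := nsmul_mem_of_addClosed S hS (hIoo hx) n (by omega)
  have heq : (n : ℝ) * (t / n) = t := by field_simp
  rwa [heq] at this
end

section
/- Let V be a finite-dimensional vector space over a field K, and let f, s, n be linear endomorphisms of V such that f = s + n, s and n commute, n is nilpotent, and s is semisimple (every s-invariant subspace of V admits an s-invariant complement). Then the generalized kernel of f equals the kernel of s; that is, ⨆_{k ∈ ℕ} ker(f^k) = ker(s). -/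
/-- If `f = s + n` with `s` and `n` commuting endomorphisms of a finite-dimensional
vector space, `n` nilpotent and `s` semisimple (every `s`-invariant subspace admits an
`s`-invariant complement), then the generalized kernel of `f` equals the kernel of `s`. -/
theorem generalizedKernel_eq_ker_semisimple_part
    {K V : Type*} [Field K] [AddCommGroup V] [Module K V] [FiniteDimensional K V]
    (f s n : Module.End K V) (hfsn : f = s + n) (hcomm : Commute s n)
    (hn : IsNilpotent n)
    (hs : ∀ W : Submodule K V, W ≤ W.comap s →
      ∃ W' : Submodule K V, W' ≤ W'.comap s ∧ IsCompl W W') :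
    (⨆ k : ℕ, LinearMap.ker (f ^ k)) = LinearMap.ker s := by
  have hss : s.IsSemisimple := by
    rw [Module.End.isSemisimple_iff]
    intro p hp
    rw [Module.End.mem_invtSubmodule s] at hp
    obtain ⟨q, hq, hq'⟩ := hs p hp
    exact ⟨q, (Module.End.mem_invtSubmodule s).mpr hq, hq'⟩
  have hfs : Commute f s := by rw [hfsn]; exact ((Commute.refl s).add_left hcomm.symm)
  apply le_antisymm
  · -- generalized kernel of f ⊆ ker s
    apply iSup_le
    intro k x hx
    have hx' : x ∈ f.genEigenspace 0 (k : ℕ∞) := by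
      rw [Module.End.mem_genEigenspace_nat]
      simpa using hx
    have := Module.End.apply_eq_of_mem_of_comm_of_isFinitelySemisimple_of_isNil hx' hfs
      hss.isFinitelySemisimple (by simpa [hfsn] using hn)
    simpa [LinearMap.mem_ker] using this
  · -- ker s ⊆ generalized kernel of f
    intro x hx
    rw [LinearMap.mem_ker] at hx
    obtain ⟨k, hk⟩ := hn
    refine Submodule.mem_iSup_of_mem k ?_
    rw [LinearMap.mem_ker, hfsn, hcomm.add_pow]
    have : ∀ i ∈ Finset.range (k + 1), (s ^ i * n ^ (k - i) * (k.choose i : Module.End K V)) x = 0 := by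
      intro i hi
      rcases Nat.eq_zero_or_pos i with h0 | h0
      · subst h0
        simp [hk]
      · have heq : s ^ i * n ^ (k - i) * (k.choose i : Module.End K V)
            = n ^ (k - i) * (k.choose i : Module.End K V) * s ^ i := by
          rw [(hcomm.pow_pow i (k - i)).eq, mul_assoc, mul_assoc,
            (Nat.cast_commute (k.choose i) (s ^ i)).eq]
        rw [heq, Module.End.mul_apply]
        obtain ⟨j, rfl⟩ := Nat.exists_eq_succ_of_ne_zero h0.ne'
        rw [pow_succ]
        simp [hx]
    rw [LinearMap.sum_apply] at *
    · exact Finset.sum_eq_zero this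
end

section
/- Let V be a finite-dimensional vector space over a field K, let f, s, n be linear endomorphisms of V with f = s + n, where s and n commute, n is nilpotent, and s is semisimple (every s-invariant subspace of V admits an s-invariant complement), and let W ⊆ V be a subspace containing the range of s. Then V = W + G₀, where G₀ := ⨆_{k ∈ ℕ} ker(f^k) is the generalized kernel of f. -/
/-- If `f = s + n` with `s` and `n` commuting endomorphisms of a finite-dimensional
vector space, `n` nilpotent, `s` semisimple (every `s`-invariant subspace admits an
`s`-invariant complement), and `W` is a subspace containing the range of `s`, then
`V = W + G₀`, where `G₀ = ⨆ k, ker (f ^ k)` is the generalized kernel of `f`. -/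
theorem sup_generalizedKernel_eq_top
    {K V : Type*} [Field K] [AddCommGroup V] [Module K V] [FiniteDimensional K V]
    (f s n : Module.End K V) (hfsn : f = s + n) (hcomm : Commute s n)
    (hn : IsNilpotent n)
    (hs : ∀ U : Submodule K V, U ≤ U.comap s →
      ∃ U' : Submodule K V, U' ≤ U'.comap s ∧ IsCompl U U')
    (W : Submodule K V) (hW : LinearMap.range s ≤ W) :
    W ⊔ (⨆ k : ℕ, LinearMap.ker (f ^ k)) = ⊤ := by
  obtain ⟨m, hm⟩ := hn
  -- ker s is contained in the generalized kernel of f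
  have hker : LinearMap.ker s ≤ ⨆ k : ℕ, LinearMap.ker (f ^ k) := by
    intro x hx
    rw [LinearMap.mem_ker] at hx
    have key : ∀ k : ℕ, (f ^ k) x = (n ^ k) x := by
      intro k
      induction k with
      | zero => simp
      | succ k ih =>
        rw [pow_succ', pow_succ']
        rw [Module.End.mul_apply, ih, Module.End.mul_apply, hfsn,
          LinearMap.add_apply]
        have : s ((n ^ k) x) = (n ^ k) (s x) := by
          have := (hcomm.pow_right k).eq
          calc s ((n ^ k) x) = (s * n ^ k) x := rfl
            _ = (n ^ k * s) x := by rw [this]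
            _ = (n ^ k) (s x) := rfl
        rw [this, hx]
        simp
    refine Submodule.mem_iSup_of_mem m ?_
    rw [LinearMap.mem_ker, key m, hm]
    rfl
  -- get an s-invariant complement of ker s
  obtain ⟨U', hU's, hcompl⟩ := hs (LinearMap.ker s) (by
    intro x hx
    simp only [LinearMap.mem_ker, Submodule.mem_comap] at *
    rw [hx]; simp)
  -- s restricted to U' is injective hence surjective, so U' ≤ range s ≤ W
  have hU'range : U' ≤ LinearMap.range s := by
    set s' : U' →ₗ[K] U' := s.restrict (fun x hx => hU's hx) with hs'
    have hinj : Function.Injective s' := by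
      rw [← LinearMap.ker_eq_bot, LinearMap.ker_eq_bot']
      intro ⟨x, hxU⟩ hsx
      have : s x = 0 := congrArg Subtype.val hsx
      have hx0 : x ∈ LinearMap.ker s ⊓ U' := ⟨this, hxU⟩
      rw [hcompl.inf_eq_bot] at hx0
      exact Subtype.ext hx0
    have hsurj : Function.Surjective s' :=
      (LinearMap.injective_iff_surjective).mp hinj
    intro y hy
    obtain ⟨⟨x, hxU⟩, hx⟩ := hsurj ⟨y, hy⟩
    exact ⟨x, congrArg Subtype.val hx⟩
  have := hcompl.sup_eq_top
  rw [eq_top_iff, ← this]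
  exact sup_le (le_trans hker le_sup_right)
    (le_trans (le_trans hU'range hW) le_sup_left)
end
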